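/- arXiv:1012.3558 — 2 statements merged into one kernel-verified Lean document; each statement's English description precedes it below -/
import Mathlib

section
/- Let α : B → A be a homomorphism of k-algebras, and regard A as a B-B-bimodule via α (b·a·b' = α(b) a α(b')). If B is isomorphic to a direct summand of A as a B-B-bimodule, then α is injective and the image of α is a direct summand of A as a B-B-bimodule; more precisely, α is split injective as a homomorphism of B-B-bimodules. -/
/-- Let `α : B → A` be a homomorphism of `k`-algebras, and regard `A` as a `B`-`B`-bimodule
via `α`.  If `B` is isomorphic to a direct summand of `A` as a `B`-`B`-bimodule (witnessed by
bimodule homomorphisms `ι : B → A` and `π : A → B` with `π ∘ ι = id`), then `α` is injective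
and its image is a direct summand of `A` as a `B`-`B`-bimodule; more precisely, `α` is split
injective as a homomorphism of `B`-`B`-bimodules, i.e. it admits a retraction which is a
`B`-`B`-bimodule homomorphism. -/
theorem algHom_split_injective_of_bimodule_summand
    (k : Type) [CommRing k]
    (B : Type) [Ring B] [Algebra k B]
    (A : Type) [Ring A] [Algebra k A]
    (α : B →ₐ[k] A)
    (ι : B →ₗ[k] A) (π : A →ₗ[k] B)
    (hι : ∀ (b x b' : B), ι (b * x * b') = α b * ι x * α b')
    (hπ : ∀ (b : B) (a : A) (b' : B), π (α b * a * α b') = b * π a * b')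
    (hπι : ∀ x : B, π (ι x) = x) :
    Function.Injective α ∧
      ∃ ρ : A →ₗ[k] B,
        (∀ (b : B) (a : A) (b' : B), ρ (α b * a * α b') = b * ρ a * b') ∧
          ∀ x : B, ρ (α x) = x := by
  -- e := ι 1 commutes with the image of α
  set e : A := ι 1 with he
  have hcomm : ∀ b : B, α b * e = e * α b := by
    intro b
    have h1 := hι b 1 1
    have h2 := hι 1 1 b
    simp only [mul_one, one_mul, map_one] at h1 h2
    rw [← h1, ← h2]
  -- the retraction
  refine ?_
  set ρ : A →ₗ[k] B := π ∘ₗ LinearMap.mulRight k e with hρ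
  have hρα : ∀ x : B, ρ (α x) = x := by
    intro x
    have : α x * e = α x * e * α 1 := by simp
    simp only [hρ, LinearMap.comp_apply, LinearMap.mulRight_apply]
    rw [this, hπ x e 1]
    simp [he, hπι]
  have hinj : Function.Injective α := by
    intro x y hxy
    have := hρα x
    rw [hxy, hρα] at this
    exact this.symm
  refine ⟨hinj, ρ, ?_, hρα⟩
  intro b a b'
  simp only [hρ, LinearMap.comp_apply, LinearMap.mulRight_apply]
  rw [mul_assoc, hcomm b', ← mul_assoc, mul_assoc (α b) a e, hπ b (a * e) b']
end

section
/- Let G be a finite group, B a block algebra of kG, Q a p-subgroup of G. Set b = 1_B and c = Br_{ΔQ}(b) (the image of b under the Brauer homomorphism with respect to ΔQ, identified with an idempotent of kC_G(Q)). Suppose c ≠ 0 and set B_Q = kC_G(Q)·c·b ⊆ B. Then there is a direct sum decomposition Res^{G×G}_{N_{G×G}(ΔQ)}(B) = B_Q ⊕ C_Q of kN_{G×G}(ΔQ)-modules such that right multiplication by b is an isomorphism of kN_{G×G}(ΔQ)-modules kC_G(Q)c ≅ B_Q, and such that the Brauer construction C_Q(ΔQ) is zero. -/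
noncomputable section

namespace BlockHH

section

open MonoidAlgebra

variable {k : Type} [CommRing k] {G : Type} [Group G]

/-- `b` is a block idempotent of `k[G]`: a primitive nonzero central idempotent. -/
def IsBlockIdem (b : MonoidAlgebra k G) : Prop :=
  b ∈ Set.center (MonoidAlgebra k G) ∧ IsIdempotentElem b ∧ b ≠ 0 ∧
    ∀ c : MonoidAlgebra k G, c ∈ Set.center (MonoidAlgebra k G) → IsIdempotentElem c →
      c * b = c → c = 0 ∨ c = b

/-- The block `B = k[G]·b` determined by the idempotent `b`, as a `k`-submodule of `k[G]`. -/
def blockSubmodule (k : Type) [CommRing k] {G : Type} [Group G] (b : MonoidAlgebra k G) :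
    Submodule k (MonoidAlgebra k G) where
  carrier := {x | x * b = x}
  add_mem' := by intro x y hx hy; show (x + y) * b = x + y; rw [add_mul, hx, hy]
  zero_mem' := by show (0 : MonoidAlgebra k G) * b = 0; rw [zero_mul]
  smul_mem' := by intro r x hx; show (r • x) * b = r • x; rw [smul_mul_assoc, hx]

/-- The `k`-span of a subset `S ⊆ G` inside `k[G]` (e.g. `k[C_G(Q)] ⊆ k[G]`). -/
def spanOf (k : Type) [CommRing k] {G : Type} [Group G] (S : Set G) :
    Submodule k (MonoidAlgebra k G) :=
  MonoidAlgebra.supported k k S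

variable [Finite G]

/-- The relative trace `Tr_P^G : a ↦ ∑_{x ∈ [G/P]} x a x⁻¹` (using fixed coset
representatives), for the conjugation action of `G` on `k[G]`. -/
def relTr (P : Subgroup G) (a : MonoidAlgebra k G) : MonoidAlgebra k G :=
  letI : Fintype (G ⧸ P) := Fintype.ofFinite _
  ∑ c : G ⧸ P, of k G (Quotient.out c) * a * of k G (Quotient.out c)⁻¹

/-- `a ∈ k[G]` is invariant under conjugation by the subgroup `P`. -/
def IsConjInvariant (P : Subgroup G) (a : MonoidAlgebra k G) : Prop :=
  ∀ u ∈ P, of k G u * a * of k G u⁻¹ = a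

/-- `P` is a defect group of the block idempotent `b`: a minimal subgroup such that `b` is a
relative trace from `P` of a `P`-conjugation-invariant element (Brauer's definition; this
is equivalent to `B` being a direct summand of `B ⊗_{kP} B` as a `B`-`B`-bimodule). -/
def IsDefectGroup (b : MonoidAlgebra k G) (P : Subgroup G) : Prop :=
  (∃ a, IsConjInvariant P a ∧ relTr P a = b) ∧
    ∀ Q : Subgroup G, (∃ a, IsConjInvariant Q a ∧ relTr Q a = b) → ¬Q < P

/-- The Brauer homomorphism with respect to a subgroup `Q`: truncation of the support
to the centralizer `C_G(Q)`, identifying `B(ΔQ)` with its canonical embedding into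
`k[C_G(Q)] ⊆ k[G]`. -/
def brMap (Q : Subgroup G) (a : MonoidAlgebra k G) : MonoidAlgebra k G :=
  letI : DecidablePred (· ∈ Subgroup.centralizer (Q : Set G)) := Classical.decPred _
  MonoidAlgebra.ofCoeff (Finsupp.filter (· ∈ Subgroup.centralizer (Q : Set G)) a.coeff)

/-- The diagonal subgroup `ΔQ = {(u, u) | u ∈ Q}` of `G × G`. -/
def deltaSub (Q : Subgroup G) : Subgroup (G × G) :=
  Q.map ((MonoidHom.id G).prod (MonoidHom.id G))

/-- Conjugation by `g` as a `k`-linear endomorphism of `k[G]`. -/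
def conjLin (k : Type) [CommRing k] {G : Type} [Group G] (g : G) :
    MonoidAlgebra k G →ₗ[k] MonoidAlgebra k G :=
  (LinearMap.mulRight k (of k G g⁻¹)).comp (LinearMap.mulLeft k (of k G g))

/-- The relative trace `Tr_R^Q` as a linear endomorphism of `k[G]` (conjugation action),
using fixed coset representatives of `R` in `Q`. -/
def relTrLin (k : Type) [CommRing k] {G : Type} [Group G] [Finite G] (Q R : Subgroup G) :
    MonoidAlgebra k G →ₗ[k] MonoidAlgebra k G :=
  letI : Fintype (Q ⧸ R.subgroupOf Q) := Fintype.ofFinite _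
  ∑ c : Q ⧸ R.subgroupOf Q, conjLin k ((Quotient.out c : Q) : G)

/-- The submodule of `R`-conjugation-invariant elements of a submodule `C ⊆ k[G]`. -/
def invSub (R : Subgroup G) (C : Submodule k (MonoidAlgebra k G)) :
    Submodule k (MonoidAlgebra k G) :=
  C ⊓
    { carrier := {a | IsConjInvariant R a}
      add_mem' := by
        intro a b ha hb u hu
        simp only [mul_add, add_mul, ha u hu, hb u hu]
      zero_mem' := by intro u hu; simp
      smul_mem' := by
        intro r a ha u hu
        simp only [mul_smul_comm, smul_mul_assoc, ha u hu] }

/-- The image `Tr_R^Q (C^R)` of the `R`-invariants of `C` under the relative trace. -/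
def traceImSub (Q R : Subgroup G) (C : Submodule k (MonoidAlgebra k G)) :
    Submodule k (MonoidAlgebra k G) :=
  (invSub R C).map (relTrLin k Q R)

/-- `e` is a block idempotent of the group algebra of the subgroup whose underlying set
is `S` (viewed inside `k[G]`): a primitive nonzero idempotent supported on `S` and central
in `k[S]`. -/
def IsBlockIdemOf (S : Set G) (e : MonoidAlgebra k G) : Prop :=
  e ∈ spanOf k S ∧ IsIdempotentElem e ∧ e ≠ 0 ∧
    (∀ x ∈ spanOf k S, e * x = x * e) ∧
    ∀ c : MonoidAlgebra k G, c ∈ spanOf k S → IsIdempotentElem c →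
      (∀ x ∈ spanOf k S, c * x = x * c) → c * e = c → c = 0 ∨ c = e

/-- `(Q, e)` is a Brauer pair for the block idempotent `b`. -/
def IsBrauerPair (p : ℕ) (b : MonoidAlgebra k G) (Q : Subgroup G) (e : MonoidAlgebra k G) :
    Prop :=
  IsPGroup p ↥Q ∧ IsBlockIdemOf (Subgroup.centralizer (Q : Set G) : Set G) e ∧
    e * brMap Q b = e

/-- Two Brauer pairs are `G`-conjugate. -/
def BrauerPairConj (Q : Subgroup G) (e : MonoidAlgebra k G) (Q' : Subgroup G)
    (e' : MonoidAlgebra k G) : Prop :=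
  ∃ g : G, Q' = Q.map (MulAut.conj g).toMonoidHom ∧ e' = of k G g * e * of k G g⁻¹

end

section Aux
open MonoidAlgebra

variable {k : Type} [CommRing k] {G : Type} [Group G] {Q : Subgroup G}

instance : CoeFun (MonoidAlgebra k G) (fun _ => G → k) := ⟨fun a => a.coeff⟩

/-- conjugation-ish helper -/
def cnj (x y : G) (a : MonoidAlgebra k G) : MonoidAlgebra k G :=
  of k G x * a * of k G y⁻¹

theorem cnj_apply (x y : G) (a : MonoidAlgebra k G) (g : G) :
    cnj x y a g = a (x⁻¹ * (g * y)) := by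
  rw [cnj, of_apply, of_apply, MonoidAlgebra.coeff_mul_single_apply, inv_inv,
    MonoidAlgebra.coeff_single_mul_apply, one_mul, mul_one]

theorem mem_spanOf {S : Set G} {a : MonoidAlgebra k G} :
    a ∈ spanOf k S ↔ ∀ g : G, a g ≠ 0 → g ∈ S := by
  rw [spanOf, MonoidAlgebra.mem_supported]
  constructor
  · intro h g hg; exact h (Finsupp.mem_support_iff.mpr hg)
  · intro h g hg; exact h g (Finsupp.mem_support_iff.mp hg)


theorem ma_add_apply (a b : MonoidAlgebra k G) (g : G) : (a + b) g = a g + b g := rfl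
theorem ma_sub_apply (a b : MonoidAlgebra k G) (g : G) : (a - b) g = a g - b g :=
  Finsupp.sub_apply a.coeff b.coeff g
theorem ma_smul_apply (r : k) (a : MonoidAlgebra k G) (g : G) : (r • a) g = r * a g := rfl
theorem ma_zero_apply (g : G) : (0 : MonoidAlgebra k G) g = 0 := rfl

theorem brMap_apply_mem {a : MonoidAlgebra k G} {g : G}
    (h : g ∈ Subgroup.centralizer (Q : Set G)) : brMap Q a g = a g := by
  rw [brMap, coeff_ofCoeff, Finsupp.filter_apply, if_pos h]

theorem brMap_apply_not_mem {a : MonoidAlgebra k G} {g : G}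
    (h : g ∉ Subgroup.centralizer (Q : Set G)) : brMap Q a g = 0 := by
  rw [brMap, coeff_ofCoeff, Finsupp.filter_apply, if_neg h]

theorem brMap_add (a b : MonoidAlgebra k G) :
    brMap Q (a + b) = brMap Q a + brMap Q b := by
  ext g
  by_cases h : g ∈ Subgroup.centralizer (Q : Set G) <;>
    simp [brMap_apply_mem, brMap_apply_not_mem, h, ma_add_apply, ma_zero_apply]

theorem brMap_zero : brMap Q (0 : MonoidAlgebra k G) = 0 := by
  ext g
  by_cases h : g ∈ Subgroup.centralizer (Q : Set G) <;>
    simp [brMap_apply_mem, brMap_apply_not_mem, h, ma_zero_apply]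

theorem brMap_smul (r : k) (a : MonoidAlgebra k G) :
    brMap Q (r • a) = r • brMap Q a := by
  ext g
  by_cases h : g ∈ Subgroup.centralizer (Q : Set G) <;>
    simp [brMap_apply_mem, brMap_apply_not_mem, h, ma_smul_apply, ma_zero_apply]

theorem brMap_sub (a b : MonoidAlgebra k G) :
    brMap Q (a - b) = brMap Q a - brMap Q b := by
  ext g
  by_cases h : g ∈ Subgroup.centralizer (Q : Set G) <;>
    simp [brMap_apply_mem, brMap_apply_not_mem, h, ma_sub_apply, ma_zero_apply]

theorem brMap_mem_spanOf (a : MonoidAlgebra k G) :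
    brMap Q a ∈ spanOf k (Subgroup.centralizer (Q : Set G)) := by
  rw [mem_spanOf]
  intro g hg
  by_contra h
  exact hg (brMap_apply_not_mem h)

theorem brMap_eq_self {a : MonoidAlgebra k G}
    (h : a ∈ spanOf k (Subgroup.centralizer (Q : Set G))) : brMap Q a = a := by
  ext g
  by_cases hg : g ∈ Subgroup.centralizer (Q : Set G)
  · rw [brMap_apply_mem hg]
  · rw [brMap_apply_not_mem hg]
    by_contra h0
    exact hg (mem_spanOf.mp h g fun h' => h0 h'.symm)

theorem brMap_eq_zero {a : MonoidAlgebra k G}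
    (h : ∀ g ∈ Subgroup.centralizer (Q : Set G), a g = 0) : brMap Q a = 0 := by
  ext g
  by_cases hg : g ∈ Subgroup.centralizer (Q : Set G)
  · rw [brMap_apply_mem hg, h g hg]; rfl
  · rw [brMap_apply_not_mem hg]; rfl

theorem brMap_brMap (a : MonoidAlgebra k G) : brMap Q (brMap Q a) = brMap Q a :=
  brMap_eq_self (brMap_mem_spanOf a)

/-- the linear map version -/
def brLin (Q : Subgroup G) : MonoidAlgebra k G →ₗ[k] MonoidAlgebra k G where
  toFun := brMap Q
  map_add' := brMap_add
  map_smul' := brMap_smul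

@[simp] theorem brLin_apply (a : MonoidAlgebra k G) : brLin Q a = brMap Q a := rfl


-- ## multiplication and spans

theorem support_mul_subset_left {S : Set G} {a x : MonoidAlgebra k G}
    (ha : a ∈ spanOf k S) (g : G) (hg : (a * x) g ≠ 0) :
    ∃ y ∈ S, ∃ z : G, x z ≠ 0 ∧ y * z = g := by
  classical
  have h1 : g ∈ (a * x).coeff.support := Finsupp.mem_support_iff.mpr hg
  have h2 := MonoidAlgebra.support_coeff_mul_subset a x h1
  rw [Finset.mem_mul] at h2
  obtain ⟨y, hy, z, hz, hyz⟩ := h2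
  exact ⟨y, mem_spanOf.mp ha y (Finsupp.mem_support_iff.mp hy), z,
    Finsupp.mem_support_iff.mp hz, hyz⟩

theorem support_mul_subset_right {S : Set G} {a x : MonoidAlgebra k G}
    (ha : a ∈ spanOf k S) (g : G) (hg : (x * a) g ≠ 0) :
    ∃ z : G, x z ≠ 0 ∧ ∃ y ∈ S, z * y = g := by
  classical
  have h1 : g ∈ (x * a).coeff.support := Finsupp.mem_support_iff.mpr hg
  have h2 := MonoidAlgebra.support_coeff_mul_subset x a h1
  rw [Finset.mem_mul] at h2
  obtain ⟨z, hz, y, hy, hyz⟩ := h2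
  exact ⟨z, Finsupp.mem_support_iff.mp hz,
    y, mem_spanOf.mp ha y (Finsupp.mem_support_iff.mp hy), hyz⟩

theorem mul_mem_spanOf_centralizer {a x : MonoidAlgebra k G}
    (ha : a ∈ spanOf k (Subgroup.centralizer (Q : Set G)))
    (hx : x ∈ spanOf k (Subgroup.centralizer (Q : Set G))) :
    a * x ∈ spanOf k (Subgroup.centralizer (Q : Set G)) := by
  rw [mem_spanOf]
  intro g hg
  obtain ⟨y, hy, z, hz, hyz⟩ := support_mul_subset_left ha g hg
  have hzC := mem_spanOf.mp hx z hz
  rw [← hyz]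
  exact Subgroup.mul_mem _ hy hzC

theorem brMap_mul_left {a : MonoidAlgebra k G}
    (ha : a ∈ spanOf k (Subgroup.centralizer (Q : Set G))) (x : MonoidAlgebra k G) :
    brMap Q (a * x) = a * brMap Q x := by
  have hx : x = brMap Q x + (x - brMap Q x) := by rw [add_sub_cancel]
  have h2 : brMap Q (a * (x - brMap Q x)) = 0 := by
    apply brMap_eq_zero
    intro g hg
    by_contra h0
    obtain ⟨y, hy, z, hz, hyz⟩ := support_mul_subset_left ha g h0
    have hzn : z ∉ Subgroup.centralizer (Q : Set G) := by
      intro hzC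
      apply hz
      rw [ma_sub_apply, brMap_apply_mem hzC, sub_self]
    apply hzn
    have : z = y⁻¹ * g := by rw [← hyz]; group
    rw [this]
    exact Subgroup.mul_mem _ (Subgroup.inv_mem _ hy) hg
  calc brMap Q (a * x)
      = brMap Q (a * brMap Q x + a * (x - brMap Q x)) := by rw [← mul_add, ← hx]
    _ = brMap Q (a * brMap Q x) + brMap Q (a * (x - brMap Q x)) := brMap_add _ _
    _ = a * brMap Q x := by
        rw [h2, add_zero, brMap_eq_self (mul_mem_spanOf_centralizer ha (brMap_mem_spanOf x))]

theorem brMap_mul_right {a : MonoidAlgebra k G}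
    (ha : a ∈ spanOf k (Subgroup.centralizer (Q : Set G))) (x : MonoidAlgebra k G) :
    brMap Q (x * a) = brMap Q x * a := by
  have hx : x = brMap Q x + (x - brMap Q x) := by rw [add_sub_cancel]
  have h2 : brMap Q ((x - brMap Q x) * a) = 0 := by
    apply brMap_eq_zero
    intro g hg
    by_contra h0
    obtain ⟨z, hz, y, hy, hyz⟩ := support_mul_subset_right ha g h0
    have hzn : z ∉ Subgroup.centralizer (Q : Set G) := by
      intro hzC
      apply hz
      rw [ma_sub_apply, brMap_apply_mem hzC, sub_self]
    apply hzn
    have : z = g * y⁻¹ := by rw [← hyz]; group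
    rw [this]
    exact Subgroup.mul_mem _ hg (Subgroup.inv_mem _ hy)
  calc brMap Q (x * a)
      = brMap Q (brMap Q x * a + (x - brMap Q x) * a) := by rw [← add_mul, ← hx]
    _ = brMap Q (brMap Q x * a) + brMap Q ((x - brMap Q x) * a) := brMap_add _ _
    _ = brMap Q x * a := by
        rw [h2, add_zero, brMap_eq_self (mul_mem_spanOf_centralizer (brMap_mem_spanOf x) ha)]


-- ## conjugation lemmas

theorem of_mul_of (g h : G) : of k G g * of k G h = of k G (g * h) := by
  rw [← map_mul]

theorem of_mul_of_inv (g : G) : of k G g * of k G g⁻¹ = 1 := by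
  rw [of_mul_of, mul_inv_cancel, map_one]

theorem of_inv_mul_of (g : G) : of k G g⁻¹ * of k G g = 1 := by
  rw [of_mul_of, inv_mul_cancel, map_one]

theorem of_comm_of_cnj {g : G} {z : MonoidAlgebra k G} (h : cnj g g z = z) :
    of k G g * z = z * of k G g := by
  have := congrArg (· * of k G g) h
  simp only [cnj, mul_assoc, of_inv_mul_of, mul_one] at this
  exact this

theorem cnj_of_comm {g : G} {z : MonoidAlgebra k G} (h : of k G g * z = z * of k G g) :
    cnj g g z = z := by
  rw [cnj, h, mul_assoc, of_mul_of_inv, mul_one]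

theorem cnj_single (x y g : G) (r : k) :
    cnj x y (MonoidAlgebra.single g r) = MonoidAlgebra.single (x * g * y⁻¹) r := by
  rw [cnj]
  simp only [of_apply, single_mul_single, one_mul, mul_one]

theorem cnj_add (x y : G) (a b : MonoidAlgebra k G) :
    cnj x y (a + b) = cnj x y a + cnj x y b := by
  rw [cnj, cnj, cnj, mul_add, add_mul]

theorem cnj_sub (x y : G) (a b : MonoidAlgebra k G) :
    cnj x y (a - b) = cnj x y a - cnj x y b := by
  rw [cnj, cnj, cnj, mul_sub, sub_mul]

theorem cnj_zero (x y : G) : cnj x y (0 : MonoidAlgebra k G) = 0 := by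
  rw [cnj, mul_zero, zero_mul]

theorem cnj_mul (g : G) (a b : MonoidAlgebra k G) :
    cnj g g (a * b) = cnj g g a * cnj g g b := by
  have hw : ∀ w : MonoidAlgebra k G, of k G g⁻¹ * (of k G g * w) = w := fun w => by
    rw [← mul_assoc, of_inv_mul_of, one_mul]
  simp only [cnj, mul_assoc, hw]

theorem cnj_cnj (g h : G) (a : MonoidAlgebra k G) :
    cnj g g (cnj h h a) = cnj (g * h) (g * h) a := by
  simp only [cnj, mul_inv_rev, ← of_mul_of, mul_assoc]

/-- conjugation commutes with the Brauer map, given compatibility with the centralizer -/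
theorem brMap_cnj {x y : G}
    (hC : ∀ g, g ∈ Subgroup.centralizer (Q : Set G) ↔
      x * g * y⁻¹ ∈ Subgroup.centralizer (Q : Set G))
    (a : MonoidAlgebra k G) :
    brMap Q (cnj x y a) = cnj x y (brMap Q a) := by
  induction a using MonoidAlgebra.induction_linear with
  | zero => simp only [cnj_zero, brMap_zero]
  | add f g hf hg => rw [cnj_add, brMap_add, brMap_add, cnj_add, hf, hg]
  | single g r =>
      show brMap Q (cnj x y (MonoidAlgebra.single g r)) =
        cnj x y (brMap Q (MonoidAlgebra.single g r))
      have hs : ∀ (h : G), h ∈ Subgroup.centralizer (Q : Set G) →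
          brMap Q (MonoidAlgebra.single h r) = MonoidAlgebra.single h r := by
        intro h hh
        apply brMap_eq_self
        rw [mem_spanOf]
        intro g' hg'
        rcases eq_or_ne h g' with rfl | hne
        · exact hh
        · exact absurd (Finsupp.single_eq_of_ne' hne) hg'
      have hs0 : ∀ (h : G), h ∉ Subgroup.centralizer (Q : Set G) →
          brMap Q (MonoidAlgebra.single h r) = 0 := by
        intro h hh
        apply brMap_eq_zero
        intro g' hg'
        rcases eq_or_ne h g' with rfl | hne
        · exact absurd hg' hh
        · exact Finsupp.single_eq_of_ne' hne
      rw [cnj_single]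
      by_cases h : g ∈ Subgroup.centralizer (Q : Set G)
      · rw [hs _ ((hC g).mp h), hs _ h, cnj_single]
      · rw [hs0 _ (fun hmem => h ((hC g).mpr hmem)), hs0 _ h, cnj_zero]

/-- conjugation by pairs fixing the centralizer preserves its span -/
theorem cnj_mem_spanOf {x y : G}
    (hC : ∀ g, g ∈ Subgroup.centralizer (Q : Set G) →
      x * g * y⁻¹ ∈ Subgroup.centralizer (Q : Set G))
    {a : MonoidAlgebra k G} (ha : a ∈ spanOf k (Subgroup.centralizer (Q : Set G))) :
    cnj x y a ∈ spanOf k (Subgroup.centralizer (Q : Set G)) := by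
  rw [mem_spanOf]
  intro g hg
  rw [cnj_apply] at hg
  have h1 := mem_spanOf.mp ha _ hg
  have h2 := hC _ h1
  have : x * (x⁻¹ * (g * y)) * y⁻¹ = g := by group
  rwa [this] at h2

/-- for `t ∈ Q`, conjugation by `t` fixes elements supported on the centralizer -/
theorem cnj_fix_spanOf {t : G} (ht : t ∈ Q) {a : MonoidAlgebra k G}
    (ha : a ∈ spanOf k (Subgroup.centralizer (Q : Set G))) : cnj t t a = a := by
  ext g
  rw [cnj_apply]
  by_cases h : t⁻¹ * (g * t) ∈ Subgroup.centralizer (Q : Set G)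
  · have h5 : t * (t⁻¹ * (g * t)) = (t⁻¹ * (g * t)) * t :=
      (Subgroup.mem_centralizer_iff.mp h) t ht
    have hg : g = t⁻¹ * (g * t) := by
      calc g = t * (t⁻¹ * (g * t)) * t⁻¹ := by group
        _ = (t⁻¹ * (g * t)) * t * t⁻¹ := by rw [h5]
        _ = t⁻¹ * (g * t) := by group
    rw [← hg]
  · have h1 : a (t⁻¹ * (g * t)) = 0 := by
      by_contra h0
      exact h (mem_spanOf.mp ha _ h0)
    have h2 : a g = 0 := by
      by_contra h0
      have hgC := mem_spanOf.mp ha _ h0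
      have h5 : t * g = g * t := (Subgroup.mem_centralizer_iff.mp hgC) t ht
      apply h
      have hg : t⁻¹ * (g * t) = g := by
        rw [← h5]; group
      rw [hg]; exact hgC
    rw [h1, h2]


-- ## deltaSub / normalizer facts

theorem mem_deltaSub {x y : G} : (x, y) ∈ deltaSub Q ↔ x ∈ Q ∧ y = x := by
  rw [deltaSub, Subgroup.mem_map]
  constructor
  · rintro ⟨u, hu, h⟩
    simp only [MonoidHom.prod_apply, MonoidHom.id_apply, Prod.mk.injEq] at h
    obtain ⟨h1, h2⟩ := h
    subst h1; subst h2
    exact ⟨hu, rfl⟩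
  · rintro ⟨hx, rfl⟩
    exact ⟨y, hx, rfl⟩

theorem normalizer_conj {x y u : G} (hxy : (x, y) ∈ Subgroup.normalizer (deltaSub Q : Set (G × G))) (hu : u ∈ Q) :
    x * u * x⁻¹ ∈ Q ∧ y * u * y⁻¹ = x * u * x⁻¹ := by
  have h1 := (Subgroup.mem_normalizer_iff.mp hxy (u, u)).mp (mem_deltaSub.mpr ⟨hu, rfl⟩)
  have h2 : (x, y) * (u, u) * (x, y)⁻¹ = (x * u * x⁻¹, y * u * y⁻¹) := rfl
  rw [h2, mem_deltaSub] at h1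
  exact h1

theorem normalizer_conj_inv {x y u : G} (hxy : (x, y) ∈ Subgroup.normalizer (deltaSub Q : Set (G × G)))
    (hu : u ∈ Q) : x⁻¹ * u * x ∈ Q ∧ y⁻¹ * u * y = x⁻¹ * u * x := by
  have hxy' : (x⁻¹, y⁻¹) ∈ Subgroup.normalizer (deltaSub Q : Set (G × G)) := by
    have := Subgroup.inv_mem _ hxy
    rwa [Prod.inv_mk] at this
  simpa only [inv_inv] using normalizer_conj hxy' hu

theorem conj_mem_centralizer_of {x y : G}
    (h : ∀ u ∈ Q, x⁻¹ * u * x ∈ Q ∧ y⁻¹ * u * y = x⁻¹ * u * x)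
    {g : G} (hg : g ∈ Subgroup.centralizer (Q : Set G)) :
    x * g * y⁻¹ ∈ Subgroup.centralizer (Q : Set G) := by
  rw [Subgroup.mem_centralizer_iff]
  intro u hu
  obtain ⟨hv, hvy⟩ := h u hu
  have hv1 : u * x = x * (x⁻¹ * u * x) := by group
  have hv2 : (x⁻¹ * u * x) * g = g * (x⁻¹ * u * x) :=
    (Subgroup.mem_centralizer_iff.mp hg) _ hv
  have hv3 : (x⁻¹ * u * x) * y⁻¹ = y⁻¹ * u := by rw [← hvy]; group
  calc u * (x * g * y⁻¹) = (u * x) * (g * y⁻¹) := by simp only [mul_assoc]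
    _ = (x * (x⁻¹ * u * x)) * (g * y⁻¹) := by rw [hv1]
    _ = x * ((x⁻¹ * u * x) * g) * y⁻¹ := by simp only [mul_assoc]
    _ = x * (g * (x⁻¹ * u * x)) * y⁻¹ := by rw [hv2]
    _ = (x * g) * ((x⁻¹ * u * x) * y⁻¹) := by simp only [mul_assoc]
    _ = (x * g) * (y⁻¹ * u) := by rw [hv3]
    _ = (x * g * y⁻¹) * u := by simp only [mul_assoc]

theorem norm_pair_iff_centralizer {x y : G} (hxy : (x, y) ∈ Subgroup.normalizer (deltaSub Q : Set (G × G)))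
    (g : G) : g ∈ Subgroup.centralizer (Q : Set G) ↔
      x * g * y⁻¹ ∈ Subgroup.centralizer (Q : Set G) := by
  constructor
  · exact fun hg => conj_mem_centralizer_of (fun u hu => normalizer_conj_inv hxy hu) hg
  · intro hg
    have h' : ∀ u ∈ Q, (x⁻¹)⁻¹ * u * x⁻¹ ∈ Q ∧ (y⁻¹)⁻¹ * u * y⁻¹ = (x⁻¹)⁻¹ * u * x⁻¹ := by
      intro u hu
      simpa only [inv_inv] using normalizer_conj hxy hu
    have := conj_mem_centralizer_of h' hg
    have heq : x⁻¹ * (x * g * y⁻¹) * (y⁻¹)⁻¹ = g := by group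
    rwa [heq] at this

theorem norm_diag_iff_centralizer_right {x y : G} (hxy : (x, y) ∈ Subgroup.normalizer (deltaSub Q : Set (G × G)))
    (g : G) : g ∈ Subgroup.centralizer (Q : Set G) ↔
      y * g * y⁻¹ ∈ Subgroup.centralizer (Q : Set G) := by
  constructor
  · intro hg
    refine conj_mem_centralizer_of (fun u hu => ?_) hg
    refine ⟨?_, rfl⟩
    have h2 := normalizer_conj_inv hxy hu
    rw [h2.2]
    exact h2.1
  · intro hg
    have h' : ∀ u ∈ Q, (y⁻¹)⁻¹ * u * y⁻¹ ∈ Q ∧ (y⁻¹)⁻¹ * u * y⁻¹ = (y⁻¹)⁻¹ * u * y⁻¹ := by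
      intro u hu
      simp only [inv_inv, and_true]
      have h2 := normalizer_conj hxy hu
      rw [h2.2]
      exact h2.1
    have := conj_mem_centralizer_of h' hg
    have heq : y⁻¹ * (y * g * y⁻¹) * (y⁻¹)⁻¹ = g := by group
    rwa [heq] at this

-- ## center facts

theorem central_comm {b : MonoidAlgebra k G} (hb : b ∈ Set.center (MonoidAlgebra k G))
    (w : MonoidAlgebra k G) : b * w = w * b := (Set.mem_center_iff.mp hb).comm w

theorem central_cnj {b : MonoidAlgebra k G} (hb : b ∈ Set.center (MonoidAlgebra k G))
    (g : G) : cnj g g b = b := cnj_of_comm (central_comm hb (of k G g)).symm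




theorem of_inv_comm {g : G} {z : MonoidAlgebra k G} (h : of k G g * z = z * of k G g) :
    of k G g⁻¹ * z = z * of k G g⁻¹ := by
  calc of k G g⁻¹ * z = of k G g⁻¹ * ((z * of k G g) * of k G g⁻¹) := by
        rw [mul_assoc z, of_mul_of_inv, mul_one]
    _ = of k G g⁻¹ * ((of k G g * z) * of k G g⁻¹) := by rw [h]
    _ = z * of k G g⁻¹ := by rw [← mul_assoc, ← mul_assoc, of_inv_mul_of, one_mul]

/-- The complement submodule `C_Q`. -/
def compSub (Q : Subgroup G) (b : MonoidAlgebra k G) : Submodule k (MonoidAlgebra k G) where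
  carrier := {x | x * b = x ∧ brMap Q x * brMap Q b = 0}
  add_mem' := by
    rintro x y ⟨hx1, hx2⟩ ⟨hy1, hy2⟩
    exact ⟨by rw [add_mul, hx1, hy1],
      by rw [brMap_add, add_mul, hx2, hy2, add_zero]⟩
  zero_mem' := ⟨zero_mul b, by rw [brMap_zero, zero_mul]⟩
  smul_mem' := by
    rintro r x ⟨hx1, hx2⟩
    exact ⟨by rw [smul_mul_assoc, hx1],
      by rw [brMap_smul, smul_mul_assoc, hx2, smul_zero]⟩

theorem mem_compSub {Q : Subgroup G} {b x : MonoidAlgebra k G} :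
    x ∈ compSub Q b ↔ x * b = x ∧ brMap Q x * brMap Q b = 0 := Iff.rfl

-- ## relative trace lemmas

section RelTr
variable [Finite G]

theorem centralizer_conj_iff_of_mem {t : G} (ht : t ∈ Q) (g : G) :
    g ∈ Subgroup.centralizer (Q : Set G) ↔
      t * g * t⁻¹ ∈ Subgroup.centralizer (Q : Set G) := by
  constructor
  · intro hg
    have h1 : t * g = g * t := (Subgroup.mem_centralizer_iff.mp hg) t ht
    have h2 : t * g * t⁻¹ = g := by rw [h1]; group
    rwa [h2]
  · intro hg
    have h1 : t * (t * g * t⁻¹) = (t * g * t⁻¹) * t := (Subgroup.mem_centralizer_iff.mp hg) t ht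
    have h2 : (t * (t * g * t⁻¹)) * t⁻¹ = (t * g) * t⁻¹ := by rw [h1]; group
    have h4 : t * (t * g * t⁻¹) = t * g := mul_right_cancel h2
    have h3 : t * g * t⁻¹ = g := mul_left_cancel h4
    rwa [h3] at hg

theorem relTrLin_eval (R : Subgroup G) (a : MonoidAlgebra k G) :
    letI : Fintype (Q ⧸ R.subgroupOf Q) := Fintype.ofFinite _
    relTrLin k Q R a = ∑ c : Q ⧸ R.subgroupOf Q,
      cnj ((Quotient.out c : Q) : G) ((Quotient.out c : Q) : G) a := by
  simp only [relTrLin, LinearMap.sum_apply]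
  rfl

theorem cnj_sum {ι : Type*} (u v : G) (s : Finset ι) (F : ι → MonoidAlgebra k G) :
    cnj u v (∑ c ∈ s, F c) = ∑ c ∈ s, cnj u v (F c) := by
  simp only [cnj, Finset.mul_sum, Finset.sum_mul]

theorem brMap_sum {ι : Type*} (s : Finset ι) (F : ι → MonoidAlgebra k G) :
    brMap Q (∑ c ∈ s, F c) = ∑ c ∈ s, brMap Q (F c) :=
  map_sum (brLin Q) F s

theorem cnj_eq_of_mk_eq {R : Subgroup G} {z : MonoidAlgebra k G}
    (hz : IsConjInvariant R z) {t t' : Q}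
    (h : (QuotientGroup.mk t : Q ⧸ R.subgroupOf Q) = QuotientGroup.mk t') :
    cnj (t : G) (t : G) z = cnj (t' : G) (t' : G) z := by
  rw [QuotientGroup.eq] at h
  have hr : ((t⁻¹ * t' : Q) : G) ∈ R := Subgroup.mem_subgroupOf.mp h
  have hz' : cnj ((t⁻¹ * t' : Q) : G) ((t⁻¹ * t' : Q) : G) z = z := hz _ hr
  have ht' : ((t' : Q) : G) = (t : G) * ((t⁻¹ * t' : Q) : G) := by push_cast; group
  rw [ht', ← cnj_cnj, hz']

theorem relTrLin_conj_inv {R : Subgroup G} {z : MonoidAlgebra k G}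
    (hz : IsConjInvariant R z) {u : G} (hu : u ∈ Q) :
    cnj u u (relTrLin k Q R z) = relTrLin k Q R z := by
  letI : Fintype (Q ⧸ R.subgroupOf Q) := Fintype.ofFinite _
  rw [relTrLin_eval, cnj_sum]
  set u' : Q := ⟨u, hu⟩ with hu'
  have hstep : ∀ c : Q ⧸ R.subgroupOf Q,
      cnj u u (cnj ((Quotient.out c : Q) : G) ((Quotient.out c : Q) : G) z) =
        cnj ((Quotient.out (u' • c) : Q) : G) ((Quotient.out (u' • c) : Q) : G) z := by
    intro c
    rw [cnj_cnj]
    have h1 : (QuotientGroup.mk (u' * Quotient.out c) : Q ⧸ R.subgroupOf Q) =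
        QuotientGroup.mk (Quotient.out (u' • c)) :=
      (MulAction.Quotient.mk_smul_out (R.subgroupOf Q) u' c).trans
        (QuotientGroup.out_eq' (u' • c)).symm
    have h2 := cnj_eq_of_mk_eq hz h1
    have h3 : ((u' * Quotient.out c : Q) : G) = u * ((Quotient.out c : Q) : G) := rfl
    rw [h3] at h2
    exact h2
  calc (∑ c : Q ⧸ R.subgroupOf Q,
        cnj u u (cnj ((Quotient.out c : Q) : G) ((Quotient.out c : Q) : G) z))
      = ∑ c : Q ⧸ R.subgroupOf Q,
        cnj ((Quotient.out (u' • c) : Q) : G) ((Quotient.out (u' • c) : Q) : G) z :=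
        Finset.sum_congr rfl fun c _ => hstep c
    _ = ∑ c : Q ⧸ R.subgroupOf Q,
        cnj ((Quotient.out c : Q) : G) ((Quotient.out c : Q) : G) z := by
        exact Equiv.sum_comp (MulAction.toPerm u' : Equiv.Perm (Q ⧸ R.subgroupOf Q))
          (fun c => cnj ((Quotient.out c : Q) : G) ((Quotient.out c : Q) : G) z)

theorem relTrLin_mul_right {R : Subgroup G} {y : MonoidAlgebra k G}
    (hy : ∀ u ∈ Q, of k G u * y = y * of k G u) (z : MonoidAlgebra k G) :
    relTrLin k Q R z * y = relTrLin k Q R (z * y) := by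
  letI : Fintype (Q ⧸ R.subgroupOf Q) := Fintype.ofFinite _
  rw [relTrLin_eval, relTrLin_eval, Finset.sum_mul]
  refine Finset.sum_congr rfl fun c _ => ?_
  rw [cnj_mul, cnj_of_comm (hy _ (SetLike.coe_mem (Quotient.out c)))]

theorem brMap_relTrLin_comm (R : Subgroup G) (z : MonoidAlgebra k G) :
    brMap Q (relTrLin k Q R z) = relTrLin k Q R (brMap Q z) := by
  letI : Fintype (Q ⧸ R.subgroupOf Q) := Fintype.ofFinite _
  rw [relTrLin_eval, relTrLin_eval, brMap_sum]
  refine Finset.sum_congr rfl fun c _ => ?_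
  rw [brMap_cnj (centralizer_conj_iff_of_mem (SetLike.coe_mem (Quotient.out c)))]

theorem brMap_relTrLin_eq_zero {p : ℕ} (hp : p.Prime) [CharP k p] (hQ : IsPGroup p ↥Q)
    {R : Subgroup G} (hR : R < Q) (z : MonoidAlgebra k G) :
    brMap Q (relTrLin k Q R z) = 0 := by
  letI : Fintype (Q ⧸ R.subgroupOf Q) := Fintype.ofFinite _
  haveI : Fact p.Prime := ⟨hp⟩
  rw [relTrLin_eval, brMap_sum]
  have hterm : ∀ c : Q ⧸ R.subgroupOf Q,
      brMap Q (cnj ((Quotient.out c : Q) : G) ((Quotient.out c : Q) : G) z) = brMap Q z := by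
    intro c
    rw [brMap_cnj (centralizer_conj_iff_of_mem (SetLike.coe_mem (Quotient.out c)))]
    exact cnj_fix_spanOf (SetLike.coe_mem (Quotient.out c)) (brMap_mem_spanOf z)
  rw [Finset.sum_congr rfl fun c _ => hterm c, Finset.sum_const]
  have hdvd : p ∣ Nat.card (Q ⧸ R.subgroupOf Q) := by
    obtain ⟨n, hn⟩ := IsPGroup.iff_card.mp hQ
    have h1 : Nat.card (Q ⧸ R.subgroupOf Q) ∣ p ^ n := hn ▸ Subgroup.card_quotient_dvd_card _
    obtain ⟨m, hm, hcard⟩ := (Nat.dvd_prime_pow hp).mp h1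
    rcases Nat.eq_zero_or_pos m with rfl | hm1
    · exfalso
      rw [pow_zero] at hcard
      obtain ⟨hss, _⟩ := Nat.card_eq_one_iff_unique.mp hcard
      obtain ⟨u, huQ, huR⟩ := SetLike.exists_of_lt hR
      have heq : (QuotientGroup.mk (1 : Q) : Q ⧸ R.subgroupOf Q) = QuotientGroup.mk ⟨u, huQ⟩ :=
        Subsingleton.elim _ _
      rw [QuotientGroup.eq] at heq
      apply huR
      have := Subgroup.mem_subgroupOf.mp heq
      simpa using this
    · rw [hcard]
      exact dvd_pow_self p hm1.ne'
  have hcast : (((Finset.univ : Finset (Q ⧸ R.subgroupOf Q)).card : ℕ) : k) = 0 := by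
    rw [Finset.card_univ, ← Nat.card_eq_fintype_card]
    exact (CharP.cast_eq_zero_iff k p _).mpr hdvd
  calc Finset.univ.card • brMap Q z = ((Finset.univ.card : ℕ) : k) • brMap Q z :=
        (Nat.cast_smul_eq_nsmul k _ _).symm
    _ = 0 := by rw [hcast, zero_smul]

end RelTr

-- ## single-orbit evaluation and the support induction

theorem conj_eq_iff_comm' {w g : G} : w * g * w⁻¹ = g ↔ w * g = g * w := by
  rw [mul_inv_eq_iff_eq_mul]

theorem conj_single_coset {g : G} (s s' : Q) :
    (↑s : G) * g * (↑s : G)⁻¹ = (↑s' : G) * g * (↑s' : G)⁻¹ ↔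
      (QuotientGroup.mk s' : Q ⧸ (Q ⊓ Subgroup.centralizer {g}).subgroupOf Q) =
        QuotientGroup.mk s := by
  constructor
  · intro h
    rw [QuotientGroup.eq, Subgroup.mem_subgroupOf]
    have hw : ((s'⁻¹ * s : Q) : G) * g * ((s'⁻¹ * s : Q) : G)⁻¹ = g := by
      push_cast
      calc (↑s' : G)⁻¹ * ↑s * g * ((↑s' : G)⁻¹ * ↑s)⁻¹
          = (↑s' : G)⁻¹ * (↑s * g * (↑s : G)⁻¹) * ↑s' := by group
        _ = (↑s' : G)⁻¹ * (↑s' * g * (↑s' : G)⁻¹) * ↑s' := by rw [h]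
        _ = g := by group
    refine Subgroup.mem_inf.mpr ⟨SetLike.coe_mem _, ?_⟩
    rw [Subgroup.mem_centralizer_singleton_iff]
    exact conj_eq_iff_comm'.mp hw
  · intro h
    rw [QuotientGroup.eq, Subgroup.mem_subgroupOf, Subgroup.mem_inf,
      Subgroup.mem_centralizer_singleton_iff] at h
    have hw : ((s'⁻¹ * s : Q) : G) * g * ((s'⁻¹ * s : Q) : G)⁻¹ = g :=
      conj_eq_iff_comm'.mpr h.2
    push_cast at hw
    calc (↑s : G) * g * (↑s : G)⁻¹
        = ↑s' * ((↑s' : G)⁻¹ * ↑s * g * ((↑s' : G)⁻¹ * ↑s)⁻¹) * (↑s' : G)⁻¹ := by group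
      _ = ↑s' * g * (↑s' : G)⁻¹ := by rw [hw]

section StageA
variable [Finite G]

theorem relTrLin_single_orbit (g : G) (r : k) (t : Q) :
    relTrLin k Q (Q ⊓ Subgroup.centralizer {g}) (MonoidAlgebra.single g r)
      ((t : G) * g * (t : G)⁻¹) = r := by
  classical
  letI : Fintype (Q ⧸ (Q ⊓ Subgroup.centralizer {g}).subgroupOf Q) := Fintype.ofFinite _
  rw [relTrLin_eval, MonoidAlgebra.coeff_sum, Finset.sum_apply']
  have hterm : ∀ c : Q ⧸ (Q ⊓ Subgroup.centralizer {g}).subgroupOf Q,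
      (cnj ((Quotient.out c : Q) : G) ((Quotient.out c : Q) : G) (MonoidAlgebra.single g r))
        ((t : G) * g * (t : G)⁻¹) = if c = QuotientGroup.mk t then r else 0 := by
    intro c
    rw [cnj_single, MonoidAlgebra.coeff_single, Finsupp.single_apply]
    have hiff : ((Quotient.out c : Q) : G) * g * ((Quotient.out c : Q) : G)⁻¹ =
        (t : G) * g * (t : G)⁻¹ ↔ c = QuotientGroup.mk t := by
      rw [conj_single_coset (Quotient.out c) t, QuotientGroup.out_eq']
      exact eq_comm
    rw [if_congr hiff rfl rfl]
  rw [Finset.sum_congr rfl fun c _ => hterm c, Finset.sum_ite_eq' Finset.univ]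
  simp

theorem relTrLin_single_zero (R : Subgroup G) (g : G) (r : k) {h : G}
    (hh : ∀ t : Q, (t : G) * g * (t : G)⁻¹ ≠ h) :
    relTrLin k Q R (MonoidAlgebra.single g r) h = 0 := by
  classical
  letI : Fintype (Q ⧸ R.subgroupOf Q) := Fintype.ofFinite _
  rw [relTrLin_eval, MonoidAlgebra.coeff_sum, Finset.sum_apply']
  refine Finset.sum_eq_zero fun c _ => ?_
  rw [cnj_single, MonoidAlgebra.coeff_single, Finsupp.single_apply, if_neg (hh (Quotient.out c))]

theorem stageA {x : MonoidAlgebra k G}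
    (hinv : ∀ u ∈ Q, cnj u u x = x)
    (hbr : ∀ g ∈ Subgroup.centralizer (Q : Set G), x g = 0) :
    x ∈ ⨆ (R : Subgroup G) (_ : R < Q),
      traceImSub Q R (⊤ : Submodule k (MonoidAlgebra k G)) := by
  classical
  suffices H : ∀ (s : Finset G) (x : MonoidAlgebra k G), x.coeff.support ⊆ s →
      (∀ u ∈ Q, cnj u u x = x) → (∀ g ∈ Subgroup.centralizer (Q : Set G), x g = 0) →
      x ∈ ⨆ (R : Subgroup G) (_ : R < Q),
        traceImSub Q R (⊤ : Submodule k (MonoidAlgebra k G)) by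
    exact H x.coeff.support x subset_rfl hinv hbr
  intro s
  induction s using Finset.strongInduction with
  | _ s ih =>
    intro x hsupp hinv hbr
    rcases eq_or_ne x 0 with rfl | hx0
    · exact zero_mem _
    obtain ⟨g, hg⟩ := Finsupp.ne_iff.mp (fun h => hx0 (MonoidAlgebra.ext h))
    have hgx : x g ≠ 0 := by simpa using hg
    have hgC : g ∉ Subgroup.centralizer (Q : Set G) := fun h => hgx (hbr g h)
    set R := Q ⊓ Subgroup.centralizer {g} with hRdef
    have hRlt : R < Q := by
      refine lt_of_le_of_ne inf_le_left fun hEq => ?_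
      apply hgC
      rw [Subgroup.mem_centralizer_iff]
      intro u hu
      have huR : u ∈ R := hEq.symm ▸ hu
      exact Subgroup.mem_centralizer_singleton_iff.mp (Subgroup.mem_inf.mp huR).2
    have hsinv : IsConjInvariant R (MonoidAlgebra.single g (x g)) := by
      intro u hu
      have h1 : u * g = g * u :=
        Subgroup.mem_centralizer_singleton_iff.mp (Subgroup.mem_inf.mp hu).2
      have h2 : u * g * u⁻¹ = g := conj_eq_iff_comm'.mpr h1
      exact (cnj_single u u g (x g)).trans (by rw [h2])
    set s0 := relTrLin k Q R (MonoidAlgebra.single g (x g)) with hs0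
    have hs0inv : ∀ u ∈ Q, cnj u u s0 = s0 := fun u hu => relTrLin_conj_inv hsinv hu
    have hs0orbit : ∀ t : Q, s0 ((t : G) * g * (t : G)⁻¹) = x g := fun t =>
      relTrLin_single_orbit g (x g) t
    have hxorbit : ∀ t : Q, x ((t : G) * g * (t : G)⁻¹) = x g := by
      intro t
      have h1 := hinv (t : G) (SetLike.coe_mem t)
      have h2 := congrArg (fun w : MonoidAlgebra k G => w ((t : G) * g * (t : G)⁻¹)) h1
      simp only [cnj_apply] at h2
      have harg : (t : G)⁻¹ * (((t : G) * g * (t : G)⁻¹) * (t : G)) = g := by group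
      rw [harg] at h2
      exact h2.symm
    have hs0mem : s0 ∈ ⨆ (R' : Subgroup G) (_ : R' < Q),
        traceImSub Q R' (⊤ : Submodule k (MonoidAlgebra k G)) := by
      apply Submodule.mem_iSup_of_mem R
      apply Submodule.mem_iSup_of_mem hRlt
      exact Submodule.mem_map_of_mem (Submodule.mem_inf.mpr ⟨Submodule.mem_top, hsinv⟩)
    have hsubinv : ∀ u ∈ Q, cnj u u (x - s0) = x - s0 := by
      intro u hu
      rw [cnj_sub, hinv u hu, hs0inv u hu]
    have hs0zero : ∀ h : G, (∀ t : Q, (t : G) * g * (t : G)⁻¹ ≠ h) → s0 h = 0 := fun h hh =>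
      relTrLin_single_zero R g (x g) hh
    have hsubbr : ∀ h ∈ Subgroup.centralizer (Q : Set G), (x - s0) h = 0 := by
      intro h hh
      rw [ma_sub_apply, hbr h hh, zero_sub, neg_eq_zero]
      apply hs0zero
      intro t heq
      apply hgC
      have ht : (t : G) * h = h * (t : G) :=
        (Subgroup.mem_centralizer_iff.mp hh) (t : G) (SetLike.coe_mem t)
      have hgh : g = (t : G)⁻¹ * (h * (t : G)) := by rw [← heq]; group
      rw [← ht] at hgh
      have hgh2 : g = h := by rw [hgh]; group
      rw [hgh2]
      exact hh
    have hsub1 : (x - s0).coeff.support ⊆ s := by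
      intro h hh
      by_contra hns
      have hxh : x h = 0 := by
        by_contra h0
        exact hns (hsupp (Finsupp.mem_support_iff.mpr h0))
      have hs0h : s0 h = 0 := by
        rcases em (∃ t : Q, (t : G) * g * (t : G)⁻¹ = h) with ⟨t, ht⟩ | hno
        · exfalso
          apply hgx
          rw [← hxorbit t, ht, hxh]
        · exact hs0zero h fun t hteq => hno ⟨t, hteq⟩
      have : (x - s0) h = 0 := by rw [ma_sub_apply, hxh, hs0h, sub_zero]
      exact (Finsupp.mem_support_iff.mp hh) this
    have hgnot : g ∉ (x - s0).coeff.support := by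
      rw [Finsupp.notMem_support_iff, ma_sub_apply]
      have h1 : s0 g = x g := by
        have h2 := hs0orbit 1
        simpa using h2
      rw [h1, sub_self]
    have hgins : g ∈ s := hsupp (Finsupp.mem_support_iff.mpr hgx)
    have hless : (x - s0).coeff.support ⊂ s :=
      (Finset.ssubset_iff_of_subset hsub1).mpr ⟨g, hgins, hgnot⟩
    have hxs : x = s0 + (x - s0) := by abel
    rw [hxs]
    exact add_mem hs0mem (ih _ hless (x - s0) subset_rfl hsubinv hsubbr)

end StageA

-- ## the characteristic-p key lemma

section CharPKey
variable [Finite G]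

theorem mulRight_traceIm_le {R : Subgroup G} (hR : R ≤ Q) {y : MonoidAlgebra k G}
    (hy : ∀ u ∈ Q, cnj u u y = y) :
    (traceImSub Q R (⊤ : Submodule k (MonoidAlgebra k G))).map (LinearMap.mulRight k y) ≤
      traceImSub Q R (⊤ : Submodule k (MonoidAlgebra k G)) := by
  intro w hw
  obtain ⟨v, hv, rfl⟩ := hw
  obtain ⟨z, hz, rfl⟩ := hv
  have hzinv : IsConjInvariant R z := (Submodule.mem_inf.mp hz).2
  have hy' : ∀ u ∈ Q, of k G u * y = y * of k G u := fun u hu => of_comm_of_cnj (hy u hu)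
  rw [LinearMap.mulRight_apply, relTrLin_mul_right hy']
  refine Submodule.mem_map_of_mem (Submodule.mem_inf.mpr ⟨Submodule.mem_top, ?_⟩)
  intro u hu
  show cnj u u (z * y) = z * y
  rw [cnj_mul]
  have h1 : cnj u u z = z := hzinv u hu
  have h2 : cnj u u y = y := hy u (hR hu)
  rw [h1, h2]

theorem charp_key {p : ℕ} (hp : p.Prime) [CharP k p] (hQ : IsPGroup p ↥Q)
    {x y : MonoidAlgebra k G}
    (hxinv : ∀ u ∈ Q, cnj u u x = x) (hyinv : ∀ u ∈ Q, cnj u u y = y)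
    (hx0 : brMap Q x = 0) : brMap Q (x * y) = 0 := by
  have hbrx : ∀ g ∈ Subgroup.centralizer (Q : Set G), x g = 0 := by
    intro g hg
    rw [← brMap_apply_mem hg, hx0]
    rfl
  have hxM := stageA hxinv hbrx
  have hle : (⨆ (R : Subgroup G) (_ : R < Q),
        traceImSub Q R (⊤ : Submodule k (MonoidAlgebra k G))).map (LinearMap.mulRight k y)
      ≤ ⨆ (R : Subgroup G) (_ : R < Q),
        traceImSub Q R (⊤ : Submodule k (MonoidAlgebra k G)) := by
    rw [Submodule.map_iSup]
    refine iSup_le fun R => ?_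
    rw [Submodule.map_iSup]
    refine iSup_le fun hR => ?_
    exact le_trans (mulRight_traceIm_le hR.le hyinv)
      (le_iSup₂ (f := fun (R : Subgroup G) (_ : R < Q) =>
        traceImSub Q R (⊤ : Submodule k (MonoidAlgebra k G))) R hR)
  have hxyM : x * y ∈ ⨆ (R : Subgroup G) (_ : R < Q),
      traceImSub Q R (⊤ : Submodule k (MonoidAlgebra k G)) :=
    hle (Submodule.mem_map_of_mem hxM)
  have hker : (⨆ (R : Subgroup G) (_ : R < Q),
      traceImSub Q R (⊤ : Submodule k (MonoidAlgebra k G))) ≤ LinearMap.ker (brLin Q) := by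
    refine iSup_le fun R => iSup_le fun hR => ?_
    rintro w ⟨z, _, rfl⟩
    exact LinearMap.mem_ker.mpr (brMap_relTrLin_eq_zero hp hQ hR z)
  exact LinearMap.mem_ker.mp (hker hxyM)

theorem brMap_sq {p : ℕ} (hp : p.Prime) [CharP k p] (hQ : IsPGroup p ↥Q)
    {b : MonoidAlgebra k G} (hbc : b ∈ Set.center (MonoidAlgebra k G)) (hbi : b * b = b) :
    brMap Q b * brMap Q b = brMap Q b := by
  have hbinv : ∀ u ∈ Q, cnj u u b = b := fun u _ => central_cnj hbc u
  have hcinv : ∀ u ∈ Q, cnj u u (brMap Q b) = brMap Q b := fun u hu => by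
    rw [← brMap_cnj (centralizer_conj_iff_of_mem hu), hbinv u hu]
  have hdinv : ∀ u ∈ Q, cnj u u (b - brMap Q b) = b - brMap Q b := fun u hu => by
    rw [cnj_sub, hbinv u hu, hcinv u hu]
  have hd0 : brMap Q (b - brMap Q b) = 0 := by rw [brMap_sub, brMap_brMap, sub_self]
  have h1 : brMap Q ((b - brMap Q b) * b) = 0 := charp_key hp hQ hdinv hbinv hd0
  have h2 : b * b = brMap Q b * b + (b - brMap Q b) * b := by
    rw [sub_mul]; abel
  symm
  calc brMap Q b = brMap Q (b * b) := by rw [hbi]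
    _ = brMap Q (brMap Q b * b) + brMap Q ((b - brMap Q b) * b) := by rw [h2, brMap_add]
    _ = brMap Q b * brMap Q b := by
        rw [h1, add_zero, brMap_mul_left (brMap_mem_spanOf b)]

end CharPKey



end Aux

end BlockHH

open BlockHH MonoidAlgebra

/-- Let `G` be a finite group, `B` a block algebra of `k[G]` (the submodule `k[G]·b` for the
block idempotent `b`), and `Q` a `p`-subgroup of `G`.  Set `c = Br_{ΔQ}(b)` (the image of `b`
under the Brauer homomorphism, identified with an element of `k[C_G(Q)] ⊆ k[G]`), suppose
`c ≠ 0`, and set `B_Q = k[C_G(Q)]·c·b`.  Then there is a direct sum decomposition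
`Res_{N_{G×G}(ΔQ)}^{G×G}(B) = B_Q ⊕ C_Q` into `k[N_{G×G}(ΔQ)]`-submodules such that right
multiplication by `b` is an isomorphism `k[C_G(Q)]·c ≅ B_Q` of `k[N_{G×G}(ΔQ)]`-modules, and
such that the Brauer construction `C_Q(ΔQ)` is zero (every `Q`-conjugation-invariant element
of `C_Q` is a sum of relative traces from proper subgroups `R < Q`). -/
theorem block_brauer_decomposition
    (p : ℕ) (hp : p.Prime) (k : Type) [Field k] [IsAlgClosed k] [CharP k p]
    (G : Type) [Group G] [Finite G]
    (b : MonoidAlgebra k G) (hb : IsBlockIdem b)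
    (Q : Subgroup G) (hQ : IsPGroup p ↥Q)
    (hc : brMap Q b ≠ 0)
    (BQ : Submodule k (MonoidAlgebra k G))
    (hBQ : BQ = (spanOf k (Subgroup.centralizer (Q : Set G))).map
      (LinearMap.mulRight k (brMap Q b * b)))
    (kCc : Submodule k (MonoidAlgebra k G))
    (hkCc : kCc = (spanOf k (Subgroup.centralizer (Q : Set G))).map
      (LinearMap.mulRight k (brMap Q b))) :
    ∃ CQ : Submodule k (MonoidAlgebra k G),
      BQ ⊔ CQ = blockSubmodule k b ∧ BQ ⊓ CQ = ⊥ ∧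
      (∀ x y : G, (x, y) ∈ Subgroup.normalizer (deltaSub Q : Set (G × G)) →
        ∀ a ∈ BQ, of k G x * a * of k G y⁻¹ ∈ BQ) ∧
      (∀ x y : G, (x, y) ∈ Subgroup.normalizer (deltaSub Q : Set (G × G)) →
        ∀ a ∈ CQ, of k G x * a * of k G y⁻¹ ∈ CQ) ∧
      Set.BijOn (· * b) ↑kCc ↑BQ ∧
      ∀ a ∈ CQ, (∀ u ∈ Q, of k G u * a * of k G u⁻¹ = a) →
        a ∈ ⨆ (R : Subgroup G) (_ : R < Q), traceImSub Q R CQ := by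
  classical
  subst hBQ
  subst hkCc
  obtain ⟨hbcen, hbidem, -, -⟩ := hb
  have hbb : b * b = b := hbidem
  have hbcomm : ∀ w : MonoidAlgebra k G, b * w = w * b := central_comm hbcen
  have hbinv : ∀ g : G, cnj g g b = b := central_cnj hbcen
  have hcc : brMap Q b * brMap Q b = brMap Q b := brMap_sq hp hQ hbcen hbb
  have hcspan : brMap Q b ∈ spanOf k (Subgroup.centralizer (Q : Set G)) := brMap_mem_spanOf b
  have hcQinv : ∀ u ∈ Q, cnj u u (brMap Q b) = brMap Q b := fun u hu => by
    rw [← brMap_cnj (centralizer_conj_iff_of_mem hu), hbinv u]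
  have hbrcb : brMap Q (brMap Q b * b) = brMap Q b := by
    rw [brMap_mul_left hcspan, hcc]
  have hbrz : ∀ z, z ∈ spanOf k (Subgroup.centralizer (Q : Set G)) →
      brMap Q (z * (brMap Q b * b)) = z * brMap Q b := fun z hz => by
    rw [brMap_mul_left hz, hbrcb]
  have hcb_b : ∀ z : MonoidAlgebra k G,
      (z * (brMap Q b * b)) * b = z * (brMap Q b * b) := by
    intro z
    rw [mul_assoc z, mul_assoc (brMap Q b), hbb]
  refine ⟨compSub Q b, ?_, ?_, ?_, ?_, ?_, ?_⟩
  · -- sup = block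
    apply le_antisymm
    · apply sup_le
      · rintro a ⟨z, hz, rfl⟩
        exact hcb_b z
      · rintro a ⟨ha1, -⟩
        exact ha1
    · intro a ha
      have ha1 : a * b = a := ha
      rw [Submodule.mem_sup]
      refine ⟨brMap Q a * (brMap Q b * b),
        Submodule.mem_map_of_mem (brMap_mem_spanOf a),
        a - brMap Q a * (brMap Q b * b), ⟨?_, ?_⟩, by abel⟩
      · rw [sub_mul, ha1, hcb_b]
      · rw [brMap_sub, hbrz _ (brMap_mem_spanOf a), sub_mul,
          mul_assoc (brMap Q a), hcc, sub_self]
  · -- inf = bot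
    rw [eq_bot_iff]
    rintro a ⟨⟨z, hz, rfl⟩, -, ha2⟩
    have h1 : brMap Q (z * (brMap Q b * b)) = z * brMap Q b := hbrz z hz
    rw [LinearMap.mulRight_apply] at ha2 ⊢
    rw [h1, mul_assoc z, hcc] at ha2
    -- ha2 : z * brMap Q b = 0
    have h2 : z * (brMap Q b * b) = (z * brMap Q b) * b := by rw [mul_assoc]
    rw [h2, ha2, zero_mul]
    exact Submodule.zero_mem ⊥
  · -- N-stability of BQ
    rintro x y hxy a ⟨z, hz, rfl⟩
    have hcy : of k G y * brMap Q b = brMap Q b * of k G y := by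
      apply of_comm_of_cnj
      rw [← brMap_cnj (fun g => norm_diag_iff_centralizer_right hxy g), hbinv y]
    have h2 : brMap Q b * of k G y⁻¹ = of k G y⁻¹ * brMap Q b := (of_inv_comm hcy).symm
    have h1 : b * of k G y⁻¹ = of k G y⁻¹ * b := hbcomm (of k G y⁻¹)
    have key : of k G x * (z * (brMap Q b * b)) * of k G y⁻¹ =
        (of k G x * z * of k G y⁻¹) * (brMap Q b * b) := by
      calc of k G x * (z * (brMap Q b * b)) * of k G y⁻¹
          = of k G x * (z * (brMap Q b * (b * of k G y⁻¹))) := by simp only [mul_assoc]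
        _ = of k G x * (z * (brMap Q b * (of k G y⁻¹ * b))) := by rw [h1]
        _ = of k G x * (z * ((brMap Q b * of k G y⁻¹) * b)) := by simp only [mul_assoc]
        _ = of k G x * (z * ((of k G y⁻¹ * brMap Q b) * b)) := by rw [h2]
        _ = (of k G x * z * of k G y⁻¹) * (brMap Q b * b) := by simp only [mul_assoc]
    rw [LinearMap.mulRight_apply, key]
    refine Submodule.mem_map_of_mem ?_
    exact cnj_mem_spanOf (fun g hg => (norm_pair_iff_centralizer hxy g).mp hg) hz
  · -- N-stability of CQ
    rintro x y hxy a ⟨ha1, ha2⟩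
    have hcy : of k G y * brMap Q b = brMap Q b * of k G y := by
      apply of_comm_of_cnj
      rw [← brMap_cnj (fun g => norm_diag_iff_centralizer_right hxy g), hbinv y]
    have h2 : brMap Q b * of k G y⁻¹ = of k G y⁻¹ * brMap Q b := (of_inv_comm hcy).symm
    have h1 : b * of k G y⁻¹ = of k G y⁻¹ * b := hbcomm (of k G y⁻¹)
    refine ⟨?_, ?_⟩
    · calc of k G x * a * of k G y⁻¹ * b
          = of k G x * (a * (of k G y⁻¹ * b)) := by simp only [mul_assoc]
        _ = of k G x * (a * (b * of k G y⁻¹)) := by rw [h1]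
        _ = of k G x * (a * b) * of k G y⁻¹ := by simp only [mul_assoc]
        _ = of k G x * a * of k G y⁻¹ := by rw [ha1]
    · have hbr : brMap Q (of k G x * a * of k G y⁻¹) =
          of k G x * brMap Q a * of k G y⁻¹ :=
        brMap_cnj (fun g => norm_pair_iff_centralizer hxy g) a
      rw [hbr]
      calc of k G x * brMap Q a * of k G y⁻¹ * brMap Q b
          = of k G x * (brMap Q a * (of k G y⁻¹ * brMap Q b)) := by simp only [mul_assoc]
        _ = of k G x * (brMap Q a * (brMap Q b * of k G y⁻¹)) := by rw [← h2]
        _ = of k G x * (brMap Q a * brMap Q b) * of k G y⁻¹ := by simp only [mul_assoc]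
        _ = 0 := by rw [ha2, mul_zero, zero_mul]
  · -- BijOn
    refine ⟨?_, ?_, ?_⟩
    · rintro w ⟨z, hz, rfl⟩
      show (LinearMap.mulRight k (brMap Q b)) z * b ∈ _
      rw [LinearMap.mulRight_apply, mul_assoc]
      exact Submodule.mem_map_of_mem hz
    · rintro w1 ⟨z1, hz1, rfl⟩ w2 ⟨z2, hz2, rfl⟩ heq
      simp only [LinearMap.mulRight_apply] at heq ⊢
      have hw1 : z1 * brMap Q b ∈ spanOf k (Subgroup.centralizer (Q : Set G)) :=
        mul_mem_spanOf_centralizer hz1 hcspan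
      have hw2 : z2 * brMap Q b ∈ spanOf k (Subgroup.centralizer (Q : Set G)) :=
        mul_mem_spanOf_centralizer hz2 hcspan
      have e1 : brMap Q (z1 * brMap Q b * b) = z1 * brMap Q b := by
        rw [brMap_mul_left hw1, mul_assoc, hcc]
      have e2 : brMap Q (z2 * brMap Q b * b) = z2 * brMap Q b := by
        rw [brMap_mul_left hw2, mul_assoc, hcc]
      rw [← e1, ← e2, heq]
    · rintro a ⟨z, hz, rfl⟩
      refine ⟨z * brMap Q b, Submodule.mem_map_of_mem hz, ?_⟩
      show z * brMap Q b * b = _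
      rw [LinearMap.mulRight_apply, mul_assoc]
  · -- Brauer construction of CQ vanishes
    rintro a ⟨ha1, ha2⟩ hainv
    have hainv' : ∀ u ∈ Q, cnj u u a = a := hainv
    have hbQinv : ∀ u ∈ Q, cnj u u b = b := fun u _ => hbinv u
    have hbrainv : ∀ u ∈ Q, cnj u u (brMap Q a) = brMap Q a := fun u hu => by
      rw [← brMap_cnj (centralizer_conj_iff_of_mem hu), hainv' u hu]
    have hdinv : ∀ u ∈ Q, cnj u u (a - brMap Q a) = a - brMap Q a := fun u hu => by
      rw [cnj_sub, hainv' u hu, hbrainv u hu]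
    have hd0 : brMap Q (a - brMap Q a) = 0 := by rw [brMap_sub, brMap_brMap, sub_self]
    have h1 : brMap Q ((a - brMap Q a) * b) = 0 := charp_key hp hQ hdinv hbQinv hd0
    have hbra : brMap Q a = 0 := by
      have hsplit : a * b = brMap Q a * b + (a - brMap Q a) * b := by
        rw [sub_mul]; abel
      calc brMap Q a = brMap Q (a * b) := by rw [ha1]
        _ = brMap Q (brMap Q a * b) + brMap Q ((a - brMap Q a) * b) := by
            rw [hsplit, brMap_add]
        _ = brMap Q a * brMap Q b + 0 := by
            rw [h1, brMap_mul_left (brMap_mem_spanOf a)]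
        _ = 0 := by rw [ha2, add_zero]
    have hbrapt : ∀ g ∈ Subgroup.centralizer (Q : Set G), a g = 0 := by
      intro g hg
      rw [← brMap_apply_mem hg, hbra]
      rfl
    have haM := stageA hainv' hbrapt
    set Phi : MonoidAlgebra k G →ₗ[k] MonoidAlgebra k G :=
      LinearMap.mulRight k b - (LinearMap.mulRight k (brMap Q b * b)).comp
        ((brLin Q).comp (LinearMap.mulRight k b)) with hPhidef
    have hPhi : ∀ w, Phi w = w * b - brMap Q (w * b) * (brMap Q b * b) := fun w => rfl
    have hbQcomm : ∀ u ∈ Q, of k G u * b = b * of k G u := fun u _ =>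
      of_comm_of_cnj (hbinv u)
    have hcQcomm : ∀ u ∈ Q, of k G u * brMap Q b = brMap Q b * of k G u := fun u hu =>
      of_comm_of_cnj (hcQinv u hu)
    have hcbQcomm : ∀ u ∈ Q, of k G u * (brMap Q b * b) = (brMap Q b * b) * of k G u := by
      intro u hu
      rw [← mul_assoc, hcQcomm u hu, mul_assoc, hbQcomm u hu, ← mul_assoc]
    have hmap : ∀ R : Subgroup G, R < Q →
        (traceImSub Q R (⊤ : Submodule k (MonoidAlgebra k G))).map Phi ≤
          traceImSub Q R (compSub Q b) := by
      intro R hR w hw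
      obtain ⟨v, hv, rfl⟩ := hw
      obtain ⟨z, hz, rfl⟩ := hv
      have hzinv : IsConjInvariant R z := (Submodule.mem_inf.mp hz).2
      have hstep : Phi (relTrLin k Q R z) = relTrLin k Q R (Phi z) := by
        rw [hPhi, hPhi, relTrLin_mul_right hbQcomm z, brMap_relTrLin_comm,
          relTrLin_mul_right hcbQcomm, ← map_sub (relTrLin k Q R)]
      rw [hstep]
      refine Submodule.mem_map_of_mem (Submodule.mem_inf.mpr ⟨?_, ?_⟩)
      · -- Phi z ∈ compSub Q b
        rw [mem_compSub, hPhi]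
        constructor
        · rw [sub_mul, mul_assoc z, hbb, mul_assoc (brMap Q (z * b)),
            mul_assoc (brMap Q b), hbb]
        · have hzbspan : brMap Q (z * b) ∈ spanOf k (Subgroup.centralizer (Q : Set G)) :=
            brMap_mem_spanOf (z * b)
          rw [brMap_sub, brMap_mul_left hzbspan, hbrcb, sub_mul,
            mul_assoc (brMap Q (z * b)), hcc, sub_self]
      · -- R-conjugation-invariance of Phi z
        intro u hu
        have huQ : u ∈ Q := hR.le hu
        show cnj u u (Phi z) = Phi z
        rw [hPhi, cnj_sub, cnj_mul, cnj_mul, cnj_mul]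
        have hz' : cnj u u z = z := hzinv u hu
        have hcu : cnj u u (brMap Q b) = brMap Q b := hcQinv u huQ
        have hbu : cnj u u b = b := hbinv u
        have hzbu : cnj u u (brMap Q (z * b)) = brMap Q (z * b) := by
          rw [← brMap_cnj (centralizer_conj_iff_of_mem huQ), cnj_mul, hz', hbu]
        rw [hz', hcu, hbu, hzbu]
    have hle2 : (⨆ (R : Subgroup G) (_ : R < Q),
          traceImSub Q R (⊤ : Submodule k (MonoidAlgebra k G))).map Phi ≤
        ⨆ (R : Subgroup G) (_ : R < Q), traceImSub Q R (compSub Q b) := by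
      rw [Submodule.map_iSup]
      refine iSup_le fun R => ?_
      rw [Submodule.map_iSup]
      refine iSup_le fun hR => ?_
      exact le_trans (hmap R hR)
        (le_iSup₂ (f := fun (R : Subgroup G) (_ : R < Q) =>
          traceImSub Q R (compSub Q b)) R hR)
    have hfin : Phi a ∈ ⨆ (R : Subgroup G) (_ : R < Q), traceImSub Q R (compSub Q b) :=
      hle2 (Submodule.mem_map_of_mem haM)
    have hPa : Phi a = a := by
      rw [hPhi, ha1, hbra, zero_mul, sub_zero]
    rwa [hPa] at hfin
end
end
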